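/- The cusp map χ, the conformal map of the disk determined by 1 − χ(r) = 1/(1 + (2/π) log(1/(2 arctan((1−r)/(1+r))))) for 0 ≤ r < 1, satisfies 1 − χ(r) ≤ 2/log(1/(1−r)) for all 0 ≤ r < 1 for which the right-hand side is defined; in particular χ is ω-radial with ω(x) = 2/log(1/x). -/
import Mathlib


/-- The radial behaviour of the cusp map: `1 − χ(r)` for `0 ≤ r < 1`. -/
noncomputable def cuspOneMinus (r : ℝ) : ℝ :=
  1 / (1 + (2 / Real.pi) * Real.log (1 / (2 * Real.arctan ((1 - r) / (1 + r)))))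

/-- The cusp map is `ω`-radial with `ω(x) = 2/log(1/x)`:
`1 − χ(r) ≤ 2/log(1/(1−r))` whenever the right-hand side is defined (i.e. `0 < r < 1`). -/
theorem cusp_omega_radial :
    ∀ r : ℝ, 0 ≤ r → r < 1 → 0 < Real.log (1 / (1 - r)) →
      cuspOneMinus r ≤ 2 / Real.log (1 / (1 - r)) := by
  intro r hr0 hr1 hL
  set L := Real.log (1 / (1 - r)) with hLdef
  have h1r : 0 < 1 - r := by linarith
  have h1r' : (0:ℝ) < 1 + r := by linarith
  set t := (1 - r) / (1 + r) with ht
  have ht0 : 0 < t := div_pos h1r h1r'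
  have hat : 0 < Real.arctan t := by simpa using Real.arctan_strictMono ht0
  have hatle : Real.arctan t ≤ t := by
    have := Real.le_tan hat.le (Real.arctan_lt_pi_div_two t)
    rwa [Real.tan_arctan] at this
  have htle : t ≤ 1 - r := by
    rw [ht, div_le_iff₀ h1r']
    nlinarith
  set K := Real.log (1 / (2 * Real.arctan t)) with hK
  have hkey : L - Real.log 2 ≤ K := by
    have h1 : Real.log (2 * Real.arctan t) ≤ Real.log (2 * (1 - r)) := by
      apply Real.log_le_log (by positivity)
      nlinarith
    have h2 : K = -Real.log (2 * Real.arctan t) := by rw [hK, one_div, Real.log_inv]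
    have h3 : Real.log (2 * (1 - r)) = Real.log 2 + Real.log (1 - r) :=
      Real.log_mul (by norm_num) (ne_of_gt h1r)
    have h4 : L = -Real.log (1 - r) := by rw [hLdef, one_div, Real.log_inv]
    linarith
  have hpi3 : (3:ℝ) < Real.pi := Real.pi_gt_three
  have hpi4 : Real.pi < 4 := by
    have := Real.pi_lt_d2; linarith
  have hpi0 : (0:ℝ) < Real.pi := by linarith
  have hlog2 : Real.log 2 < 0.7 := by
    have := Real.log_two_lt_d9; linarith
  have hlog2' : (0:ℝ) < Real.log 2 := Real.log_pos (by norm_num)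
  have hK' : -0.7 < K := by linarith
  have hD : 0 < 1 + (2 / Real.pi) * K := by
    have h5 : 1 + (2 / Real.pi) * K = (Real.pi + 2 * K) / Real.pi := by
      field_simp
    rw [h5]
    apply div_pos _ hpi0
    linarith
  show 1 / (1 + (2 / Real.pi) * K) ≤ 2 / L
  rw [div_le_div_iff₀ hD hL]
  have h6 : L - Real.log 2 ≤ K := hkey
  have h7 : 2 * (1 + (2 / Real.pi) * K) = (2 * Real.pi + 4 * K) / Real.pi := by
    field_simp; ring
  rw [one_mul, h7, le_div_iff₀ hpi0]
  nlinarith
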